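/- arXiv:1205.2014 — 6 statements merged into one kernel-verified Lean document; each statement's English description precedes it below -/
import Mathlib

section
/- Let θ ∈ ℝ^n and suppose there exists φ ∈ ℝ such that Re(e^{iφ} e^{i(arg c_α + ⟨α,θ⟩)}) ≥ 0 for all α ∈ A but not all these quantities are zero (θ is in the complement of the lopsided coamoeba). If additionally θ is not in the closure of the lopsided coamoeba, then there exists φ' such that Re(e^{iφ'} e^{i(arg c_α + ⟨α,θ⟩)}) > 0 strictly for all α ∈ A. -/
/-!
After a rotation, `f⟨θ⟩` lies in the closed right half-plane. If its arguments span an arc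
shorter than `π`, rotating the midpoint of that arc onto the positive real axis gives an open
half-plane. Otherwise `f⟨θ⟩` contains `-i` and `i` (at exponents `α`, `β`) besides a point of
the open half-plane (at `γ`). Moving `θ` to `θ + t (β - α)` turns the arguments of these points
by `t⟨α, β - α⟩ < t⟨β, β - α⟩` and `t⟨γ, β - α⟩`, so for small `t > 0` the three points are
in no closed half-plane, and `θ` lies in the closure of the lopsided coamoeba.
-/

open Complex Filter Topology

lemma exp_ofReal_add_mul_I (x y : ℝ) :
    exp (↑(x + y) * I) = exp (↑x * I) * exp (↑y * I) := by
  rw [← exp_add]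
  push_cast
  ring_nf

lemma exp_arg_exp_ofReal_mul_I (x : ℝ) : exp (↑(arg (exp (↑x * I))) * I) = exp (↑x * I) := by
  simpa using norm_mul_exp_arg_mul_I (exp (↑x * I))

lemma re_exp_ofReal_mul_I_mul (φ : ℝ) (w : ℂ) :
    (exp (↑φ * I) * w).re = ‖w‖ * Real.cos (φ + arg w) := by
  conv_lhs => rw [← norm_mul_exp_arg_mul_I w, mul_left_comm, ← exp_ofReal_add_mul_I]
  rw [re_ofReal_mul, exp_ofReal_mul_I_re]

lemma dotProduct_sub_lt_dotProduct_sub {ι : Type*} [Fintype ι] {x y : ι → ℝ} (h : x ≠ y) :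
    x ⬝ᵥ (y - x) < y ⬝ᵥ (y - x) := by
  rw [← sub_pos, ← sub_dotProduct]
  simpa using Matrix.dotProduct_self_star_pos_iff.2 (sub_ne_zero.2 h.symm)

/-- The positive combination `sin (G - s) - sin G * exp (s * I) + sin s * exp (G * I)` of the
three points vanishes. -/
lemma not_re_nonneg_of_gaps_lt_pi {w : ℂ} (hw : w ≠ 0) {s G : ℝ} (hs : 0 < s) (hsG : s < G)
    (hG : G < Real.pi) :
    ¬ (0 ≤ w.re ∧ 0 ≤ (-(exp (↑s * I) * w)).re ∧ 0 ≤ (exp (↑G * I) * w).re) := by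
  rintro ⟨h₀, h₁, h₂⟩
  simp only [neg_re, mul_re, exp_ofReal_mul_I_re, exp_ofReal_mul_I_im] at h₁ h₂
  have hsinGs : 0 < Real.sin (G - s) := Real.sin_pos_of_pos_of_lt_pi (by linarith) (by linarith)
  have hsinG : 0 < Real.sin G := Real.sin_pos_of_pos_of_lt_pi (by linarith) hG
  have hsins : 0 < Real.sin s := Real.sin_pos_of_pos_of_lt_pi hs (by linarith)
  have hcomb : Real.sin (G - s) * w.re
      + Real.sin G * -(Real.cos s * w.re - Real.sin s * w.im)
      + Real.sin s * (Real.cos G * w.re - Real.sin G * w.im) = 0 := by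
    rw [Real.sin_sub]
    ring
  have hre : w.re = 0 := by
    nlinarith [mul_nonneg hsinGs.le h₀, mul_nonneg hsinG.le h₁, mul_nonneg hsins.le h₂]
  have him : w.im = 0 := by
    rw [hre] at h₁ h₂
    nlinarith [mul_pos hsinG hsins]
  exact hw (Complex.ext hre him)

lemma exists_re_pos_or_arg_eq_of_re_nonneg {ι : Type*} {A : Finset ι} {w : ι → ℂ}
    (hw : ∀ δ ∈ A, w δ ≠ 0) (hre : ∀ δ ∈ A, 0 ≤ (w δ).re) :
    (∃ φ : ℝ, ∀ δ ∈ A, 0 < (exp (↑φ * I) * w δ).re) ∨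
      ∃ α ∈ A, ∃ β ∈ A, arg (w α) = -(Real.pi / 2) ∧ arg (w β) = Real.pi / 2 := by
  rcases A.eq_empty_or_nonempty with rfl | hA
  · exact Or.inl ⟨0, by simp⟩
  obtain ⟨α, hα, hmin⟩ := A.exists_min_image (fun δ => arg (w δ)) hA
  obtain ⟨β, hβ, hmax⟩ := A.exists_max_image (fun δ => arg (w δ)) hA
  have habs : ∀ δ ∈ A, |arg (w δ)| ≤ Real.pi / 2 :=
    fun δ hδ => abs_arg_le_pi_div_two_iff.2 (hre δ hδ)
  by_cases hspan : arg (w β) - arg (w α) < Real.pi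
  · refine Or.inl ⟨-((arg (w α) + arg (w β)) / 2), fun δ hδ => ?_⟩
    rw [re_exp_ofReal_mul_I_mul]
    have := hmin δ hδ
    have := hmax δ hδ
    exact mul_pos (norm_pos_iff.2 (hw δ hδ))
      (Real.cos_pos_of_mem_Ioo ⟨by linarith, by linarith⟩)
  · have := abs_le.1 (habs α hα)
    have := abs_le.1 (habs β hβ)
    exact Or.inr ⟨α, hα, β, hβ, by linarith, by linarith⟩

/-- For `t > 0` the points at `α` and `β` span an arc of length `π + t * (b β - b α)`, and for
small `t` the point at `γ` stays inside it, away from both ends. -/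
lemma eventually_forall_exists_re_neg {ι : Type*} {A : Finset ι} {a b : ι → ℝ} {α β γ : ι}
    (hαA : α ∈ A) (hβA : β ∈ A) (hγA : γ ∈ A)
    (hα : arg (exp (↑(a α) * I)) = -(Real.pi / 2)) (hβ : arg (exp (↑(a β) * I)) = Real.pi / 2)
    (hγ : 0 < (exp (↑(a γ) * I)).re) (hb : b α < b β) :
    ∀ᶠ t in 𝓝[>] (0 : ℝ), ∀ φ : ℝ, ∃ δ ∈ A,
      (exp (↑φ * I) * exp (↑(a δ + t * b δ) * I)).re < 0 := by
  set g := arg (exp (↑(a γ) * I)) + Real.pi / 2 with hg_def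
  have hg : 0 < g ∧ g < Real.pi := by
    have := abs_lt.1 (abs_arg_lt_pi_div_two_iff.2 (Or.inl hγ))
    constructor <;> linarith
  have hβα : exp (↑(a β) * I) = -exp (↑(a α) * I) := by
    rw [← exp_arg_exp_ofReal_mul_I (a β), ← exp_arg_exp_ofReal_mul_I (a α), hα, hβ]
    rw [exp_mul_I, exp_mul_I]
    push_cast
    simp [cos_pi_div_two, sin_pi_div_two]
  have hγα : exp (↑(a γ) * I) = exp (↑g * I) * exp (↑(a α) * I) := by
    rw [← exp_arg_exp_ofReal_mul_I (a α), hα, ← exp_ofReal_add_mul_I,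
      ← exp_arg_exp_ofReal_mul_I (a γ)]
    congr 3
    ring
  have hsmall : ∀ᶠ t in 𝓝[>] (0 : ℝ), 0 < t * (b β - b α) ∧
      t * (b β - b α) < g + t * (b γ - b α) ∧ g + t * (b γ - b α) < Real.pi := by
    have hsG : ∀ᶠ t in 𝓝 (0 : ℝ), t * (b β - b α) < g + t * (b γ - b α) :=
      ContinuousAt.eventually_lt (by fun_prop) (by fun_prop) (by simpa using hg.1)
    have hGπ : ∀ᶠ t in 𝓝 (0 : ℝ), g + t * (b γ - b α) < Real.pi :=
      ContinuousAt.eventually_lt (by fun_prop) (by fun_prop) (by simpa using hg.2)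
    filter_upwards [self_mem_nhdsWithin, nhdsWithin_le_nhds hsG, nhdsWithin_le_nhds hGπ]
      with t ht h₁ h₂
    exact ⟨mul_pos ht (sub_pos.2 hb), h₁, h₂⟩
  filter_upwards [hsmall] with t ⟨hs, hsG, hG⟩ φ
  by_contra! hnonneg
  refine not_re_nonneg_of_gaps_lt_pi (mul_ne_zero (exp_ne_zero _) (exp_ne_zero _)) hs hsG hG
    ⟨hnonneg α hαA, ?_, ?_⟩
  · have hrot : exp (↑φ * I) * exp (↑(a β + t * b β) * I) = -(exp (↑(t * (b β - b α)) * I) *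
        (exp (↑φ * I) * exp (↑(a α + t * b α) * I))) := by
      rw [show a β + t * b β = a β + (t * (b β - b α) + t * b α) by ring]
      simp only [exp_ofReal_add_mul_I, hβα]
      ring
    exact hrot ▸ hnonneg β hβA
  · have hrot : exp (↑φ * I) * exp (↑(a γ + t * b γ) * I) = exp (↑(g + t * (b γ - b α)) * I) *
        (exp (↑φ * I) * exp (↑(a α + t * b α) * I)) := by
      rw [show a γ + t * b γ = a γ + (t * (b γ - b α) + t * b α) by ring]
      simp only [exp_ofReal_add_mul_I, hγα]
      ring
    exact hrot ▸ hnonneg γ hγA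

lemma mem_closure_of_eventually_add_smul {E : Type*} [AddCommGroup E] [Module ℝ E]
    [TopologicalSpace E] [ContinuousAdd E] [ContinuousSMul ℝ E] {S : Set E} {x v : E}
    (h : ∀ᶠ t in 𝓝[>] (0 : ℝ), x + t • v ∈ S) : x ∈ closure S :=
  mem_closure_of_tendsto (((continuous_const.add (continuous_id.smul continuous_const)).tendsto'
    0 x (by simp)).mono_left nhdsWithin_le_nhds) h

theorem stmt3_general (n : ℕ) (A : Finset (Fin n → ℤ)) (c : (Fin n → ℤ) → ℂ)
    (u : (Fin n → ℝ) → (Fin n → ℤ) → ℂ)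
    (hu : ∀ θ α, u θ α =
      Complex.exp (((Complex.arg (c α) + ∑ j, (α j : ℝ) * θ j : ℝ) : ℂ) * Complex.I))
    (θ : Fin n → ℝ)
    (h1 : ∃ φ : ℝ, (∀ α ∈ A, 0 ≤ (Complex.exp ((φ : ℂ) * Complex.I) * u θ α).re) ∧
          ∃ α ∈ A, 0 < (Complex.exp ((φ : ℂ) * Complex.I) * u θ α).re)
    (h2 : θ ∉ closure {θ' : Fin n → ℝ | ¬ ∃ φ : ℝ,
          (∀ α ∈ A, 0 ≤ (Complex.exp ((φ : ℂ) * Complex.I) * u θ' α).re) ∧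
          ∃ α ∈ A, 0 < (Complex.exp ((φ : ℂ) * Complex.I) * u θ' α).re}) :
    ∃ φ' : ℝ, ∀ α ∈ A, 0 < (Complex.exp ((φ' : ℂ) * Complex.I) * u θ α).re := by
  obtain ⟨φ₀, hnonneg, γ, hγA, hγpos⟩ := h1
  set a : (Fin n → ℝ) → (Fin n → ℤ) → ℝ :=
    fun θ' δ => φ₀ + (arg (c δ) + ∑ j, (δ j : ℝ) * θ' j) with ha
  have hrot : ∀ (φ : ℝ) θ' δ,
      exp (↑φ * I) * u θ' δ = exp (↑(φ - φ₀) * I) * exp (↑(a θ' δ) * I) := by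
    intro φ θ' δ
    rw [hu, ← exp_ofReal_add_mul_I, ← exp_ofReal_add_mul_I]
    congr 3
    ring
  have hw : ∀ δ, exp (↑φ₀ * I) * u θ δ = exp (↑(a θ δ) * I) := by
    simpa using hrot φ₀ θ
  simp only [hw] at hnonneg hγpos
  rcases exists_re_pos_or_arg_eq_of_re_nonneg (fun _ _ => exp_ne_zero _) hnonneg with
    ⟨φ, hφ⟩ | ⟨α, hαA, β, hβA, hα, hβ⟩
  · exact ⟨φ + φ₀, fun δ hδ => by rw [hrot, add_sub_cancel_right]; exact hφ δ hδ⟩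
  exfalso
  apply h2
  set v : Fin n → ℝ := (fun j => (β j : ℝ)) - fun j => (α j : ℝ)
  have hαβ : α ≠ β := by
    rintro rfl
    linarith [Real.pi_pos]
  have hb := dotProduct_sub_lt_dotProduct_sub (x := fun j => (α j : ℝ)) (y := fun j => (β j : ℝ))
    fun h => hαβ (funext fun j => by exact_mod_cast congrFun h j)
  have hev := eventually_forall_exists_re_neg (a := a θ) (b := fun δ => ∑ j, (δ j : ℝ) * v j)
    hαA hβA hγA hα hβ hγpos hb
  refine mem_closure_of_eventually_add_smul (v := v) (hev.mono fun t ht => ?_)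
  rintro ⟨φ, hφ, -⟩
  obtain ⟨δ, hδ, hneg⟩ := ht (φ - φ₀)
  have hshift : a (θ + t • v) δ = a θ δ + t * ∑ j, (δ j : ℝ) * v j := by
    simp only [ha, Pi.add_apply, Pi.smul_apply, smul_eq_mul, mul_add, Finset.sum_add_distrib,
      Finset.mul_sum, mul_left_comm t]
    ring
  have := hφ δ hδ
  rw [hrot, hshift] at this
  linarith

/-- If `f⟨θ⟩` is contained in a closed half-plane with not all points on the boundary
(θ is in the complement of the lopsided coamoeba), and moreover `θ` is not in the closure
of the lopsided coamoeba, then `f⟨θ⟩` is contained in an open half-plane. -/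
theorem stmt3 (n : ℕ) (A : Finset (Fin n → ℤ)) (c : (Fin n → ℤ) → ℂ)
    (hc : ∀ α ∈ A, c α ≠ 0)
    (u : (Fin n → ℝ) → (Fin n → ℤ) → ℂ)
    (hu : ∀ θ α, u θ α =
      Complex.exp (((Complex.arg (c α) + ∑ j, (α j : ℝ) * θ j : ℝ) : ℂ) * Complex.I))
    (θ : Fin n → ℝ)
    (h1 : ∃ φ : ℝ, (∀ α ∈ A, 0 ≤ (Complex.exp ((φ : ℂ) * Complex.I) * u θ α).re) ∧
          ∃ α ∈ A, 0 < (Complex.exp ((φ : ℂ) * Complex.I) * u θ α).re)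
    (h2 : θ ∉ closure {θ' : Fin n → ℝ | ¬ ∃ φ : ℝ,
          (∀ α ∈ A, 0 ≤ (Complex.exp ((φ : ℂ) * Complex.I) * u θ' α).re) ∧
          ∃ α ∈ A, 0 < (Complex.exp ((φ : ℂ) * Complex.I) * u θ' α).re}) :
    ∃ φ' : ℝ, ∀ α ∈ A, 0 < (Complex.exp ((φ' : ℂ) * Complex.I) * u θ α).re :=
  stmt3_general n A c u hu θ h1 h2
end

section
/- The lopsided coamoeba of f equals the union over all r ∈ ℝ₊^N of the coamoebas of the polynomials f_r(z) = Σ_α r_α c_α z^α obtained by scaling the moduli of the coefficients: ℒ𝒜'(f) = ⋃_{r ∈ ℝ₊^N} 𝒜'(f_r). -/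
/-!
If `arg z_j ≡ θ_j (mod 2π)` for all `j`, then
`c_α z^α = |c_α| |z^α| e^{i(arg c_α + ⟨α, θ⟩)}`, so the terms of `f_r(z)` are positive
multiples of the unit vectors defining `ℒ𝒜'(f)`.
Rescaling `r` absorbs these moduli in both directions; to realise a given `θ` in a coamoeba,
take `z_j = e^{iθ_j}`.
-/

open Complex Finset

lemma eq_norm_mul_exp_mul_I_of_arg_eq {z : ℂ} {t : ℝ} {m : ℤ}
    (h : arg z = t + 2 * Real.pi * m) : z = ‖z‖ * exp (t * I) := by
  conv_lhs => rw [← norm_mul_exp_arg_mul_I z, h]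
  push_cast
  rw [add_mul, exp_add, show (2 * Real.pi * m * I : ℂ) = m * (2 * Real.pi * I) by ring,
    exp_int_mul_two_pi_mul_I, mul_one]

lemma exists_arg_exp_mul_I_eq (t : ℝ) : ∃ m : ℤ, arg (exp (t * I)) = t + 2 * Real.pi * m :=
  ⟨-toIocDiv Real.two_pi_pos (-Real.pi) t, by
    rw [arg_exp_mul_I]
    have := toIocMod_sub_self_eq_mul Real.two_pi_pos (-Real.pi) t
    push_cast
    linarith⟩

lemma ofReal_mul_exp_mul_I_zpow (a t : ℝ) (k : ℤ) :
    ((a : ℂ) * exp (t * I)) ^ k = ((a ^ k : ℝ) : ℂ) * exp (((k * t : ℝ) : ℂ) * I) := by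
  rw [mul_zpow, ← exp_int_mul]
  push_cast
  ring_nf

lemma mul_prod_zpow_eq_of_arg_eq {n : ℕ} (c : ℂ) (α : Fin n → ℤ) {z : Fin n → ℂ}
    {θ : Fin n → ℝ} (harg : ∀ j, ∃ m : ℤ, arg (z j) = θ j + 2 * Real.pi * m) :
    c * ∏ j, z j ^ α j = ((‖c‖ * ∏ j, ‖z j‖ ^ α j : ℝ) : ℂ) *
      exp (((arg c + ∑ j, (α j : ℝ) * θ j : ℝ) : ℂ) * I) := by
  have hpow : ∀ j,
      z j ^ α j = ((‖z j‖ ^ α j : ℝ) : ℂ) * exp ((((α j : ℝ) * θ j : ℝ) : ℂ) * I) := by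
    intro j
    obtain ⟨m, hm⟩ := harg j
    conv_lhs => rw [eq_norm_mul_exp_mul_I_of_arg_eq hm]
    exact ofReal_mul_exp_mul_I_zpow _ _ _
  conv_lhs => rw [← norm_mul_exp_arg_mul_I c]
  rw [prod_congr rfl fun j _ => hpow j, prod_mul_distrib, ← Complex.exp_sum]
  push_cast
  rw [add_mul, exp_add, sum_mul]
  ring

/-- The lopsided coamoeba of `f` (the set of `θ` whose list of unit vectors admits a
vanishing strictly positive combination) equals the union over all positive scalings
`r ∈ ℝ₊^N` of the coefficient moduli of the coamoebas of `f_r(z) = ∑ r_α c_α z^α`. -/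
theorem stmt4 (n : ℕ) (A : Finset (Fin n → ℤ)) (c : (Fin n → ℤ) → ℂ)
    (hc : ∀ α ∈ A, c α ≠ 0) :
    {θ : Fin n → ℝ | ∃ r : (Fin n → ℤ) → ℝ, (∀ α ∈ A, 0 < r α) ∧
        ∑ α ∈ A, (r α : ℂ) *
          Complex.exp (((Complex.arg (c α) + ∑ j, (α j : ℝ) * θ j : ℝ) : ℂ) * Complex.I) = 0} =
      {θ : Fin n → ℝ | ∃ r : (Fin n → ℤ) → ℝ, (∀ α ∈ A, 0 < r α) ∧
        ∃ z : Fin n → ℂ, (∀ j, z j ≠ 0) ∧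
          ∑ α ∈ A, (r α : ℂ) * c α * ∏ j, z j ^ α j = 0 ∧
          ∀ j, ∃ m : ℤ, Complex.arg (z j) = θ j + 2 * Real.pi * m} := by
  ext θ
  constructor
  · rintro ⟨r, hr, hsum⟩
    have harg := fun j => exists_arg_exp_mul_I_eq (θ j)
    refine ⟨fun α => r α / ‖c α‖,
      fun α hα => div_pos (hr α hα) (norm_pos_iff.mpr (hc α hα)),
      fun j => exp (θ j * I), fun j => exp_ne_zero _, ?_, harg⟩
    rw [← hsum]
    refine sum_congr rfl fun α hα => ?_
    rw [mul_assoc, mul_prod_zpow_eq_of_arg_eq _ _ harg]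
    simp only [norm_exp_ofReal_mul_I, one_zpow, prod_const_one, mul_one, ← mul_assoc,
      ← ofReal_mul, div_mul_cancel₀ _ (norm_ne_zero_iff.mpr (hc α hα))]
  · rintro ⟨r, hr, z, hz, hsum, harg⟩
    refine ⟨fun α => r α * (‖c α‖ * ∏ j, ‖z j‖ ^ α j), fun α hα => ?_, ?_⟩
    · have hnorm : 0 < ∏ j, ‖z j‖ ^ α j :=
        prod_pos fun j _ => zpow_pos (norm_pos_iff.mpr (hz j)) _
      exact mul_pos (hr α hα) (mul_pos (norm_pos_iff.mpr (hc α hα)) hnorm)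
    rw [← hsum]
    refine sum_congr rfl fun α _ => ?_
    rw [mul_assoc, mul_prod_zpow_eq_of_arg_eq _ _ harg]
    push_cast
    ring
end

section
/- If θ lies on the boundary of the closure of the lopsided coamoeba ℒ𝒜'(f), then the list f⟨θ⟩ contains two antipodal unit vectors; that is, there exist distinct α, β ∈ A with e^{i(arg c_α + ⟨α,θ⟩)} = −e^{i(arg c_β + ⟨β,θ⟩)}. Hence the boundary of the closed lopsided coamoeba is contained in the union of the coamoebas of the binomials c_α z^α + c_β z^β. -/
open Complex

lemma coslip (a b : ℝ) : |Real.cos a - Real.cos b| ≤ |a - b| := by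
  rw [Real.cos_sub_cos, abs_mul, abs_mul]
  have h1 := Real.abs_sin_le_one ((a + b) / 2)
  have h2 := Real.abs_sin_le_abs (x := (a - b) / 2)
  have h3 : |(a - b) / 2| = |a - b| / 2 := by rw [abs_div]; norm_num
  rw [h3] at h2
  have h4 : |(-2 : ℝ)| = 2 := by norm_num
  rw [h4]
  nlinarith [abs_nonneg (Real.sin ((a + b) / 2)), abs_nonneg (Real.sin ((a - b) / 2)),
    abs_nonneg (a - b)]

/-- If `θ` lies on the boundary of the closure of the lopsided coamoeba of `f`,
then the list `f⟨θ⟩` contains two antipodal unit vectors; hence the boundary of the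
closed lopsided coamoeba is contained in the union of the binomial coamoebas. -/
theorem stmt6 (n : ℕ) (A : Finset (Fin n → ℤ)) (c : (Fin n → ℤ) → ℂ)
    (hc : ∀ α ∈ A, c α ≠ 0)
    (u : (Fin n → ℝ) → (Fin n → ℤ) → ℂ)
    (hu : ∀ θ α, u θ α =
      Complex.exp (((Complex.arg (c α) + ∑ j, (α j : ℝ) * θ j : ℝ) : ℂ) * Complex.I))
    (θ : Fin n → ℝ)
    (hθ : θ ∈ frontier (closure {θ' : Fin n → ℝ | ¬ ∃ φ : ℝ,
          (∀ α ∈ A, 0 ≤ (Complex.exp ((φ : ℂ) * Complex.I) * u θ' α).re) ∧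
          ∃ α ∈ A, 0 < (Complex.exp ((φ : ℂ) * Complex.I) * u θ' α).re})) :
    ∃ α ∈ A, ∃ β ∈ A, α ≠ β ∧ u θ α = - u θ β := by
  classical
  rcases A.eq_empty_or_nonempty with rfl | hA
  · exfalso
    simp only [Finset.notMem_empty, false_and, exists_false, and_false, not_false_iff,
      exists_const, IsEmpty.forall_iff, implies_true, true_and, not_true, Set.setOf_true,
      closure_univ, frontier_univ, Set.mem_empty_iff_false] at hθ
  by_contra hcon
  push_neg at hcon
  -- angle function
  set ψ : (Fin n → ℝ) → (Fin n → ℤ) → ℝ :=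
    fun θ' α => Complex.arg (c α) + ∑ j, (α j : ℝ) * θ' j with hψ
  have key : ∀ (θ' : Fin n → ℝ) (α : Fin n → ℤ) (φ : ℝ),
      (Complex.exp ((φ : ℂ) * Complex.I) * u θ' α).re = Real.cos (φ + ψ θ' α) := by
    intro θ' α φ
    rw [hu, ← Complex.exp_add]
    have h : (φ : ℂ) * Complex.I +
        ((Complex.arg (c α) + ∑ j, (α j : ℝ) * θ' j : ℝ) : ℂ) * Complex.I
        = ((φ + ψ θ' α : ℝ) : ℂ) * Complex.I := by
      simp only [hψ]; push_cast; ring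
    rw [h, Complex.exp_ofReal_mul_I_re]
  have contψ : ∀ α, Continuous fun θ' : Fin n → ℝ => ψ θ' α := by
    intro α
    exact continuous_const.add (continuous_finset_sum _ fun j _ =>
      (continuous_const.mul (continuous_apply j)))
  -- rewrite the set
  set S : Set (Fin n → ℝ) := {θ' : Fin n → ℝ | ¬ ∃ φ : ℝ,
          (∀ α ∈ A, 0 ≤ (Complex.exp ((φ : ℂ) * Complex.I) * u θ' α).re) ∧
          ∃ α ∈ A, 0 < (Complex.exp ((φ : ℂ) * Complex.I) * u θ' α).re} with hSdef
  have hSmem : ∀ θ' : Fin n → ℝ, θ' ∈ S ↔ ¬ ∃ φ : ℝ,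
      (∀ α ∈ A, 0 ≤ Real.cos (φ + ψ θ' α)) ∧ ∃ α ∈ A, 0 < Real.cos (φ + ψ θ' α) := by
    intro θ'
    simp only [hSdef, Set.mem_setOf_eq, key]
  have hθc : θ ∈ closure S := by
    have h := frontier_subset_closure hθ
    rwa [closure_closure] at h
  have hθni : θ ∉ interior (closure S) := fun h => hθ.2 h
  -- antipodal contradiction helper
  have antip : ∀ α ∈ A, ∀ β ∈ A, ∀ φ : ℝ,
      Real.cos (φ + ψ θ α) = 0 → Real.sin (φ + ψ θ α) = 1 →
      Real.cos (φ + ψ θ β) = 0 → Real.sin (φ + ψ θ β) = -1 → False := by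
    intro α hα β hβ φ hc1 hs1 hc2 hs2
    have e1 : Complex.exp (((φ + ψ θ α : ℝ) : ℂ) * Complex.I) = Complex.I := by
      rw [Complex.exp_mul_I, ← Complex.ofReal_cos, ← Complex.ofReal_sin, hc1, hs1]
      simp
    have e2 : Complex.exp (((φ + ψ θ β : ℝ) : ℂ) * Complex.I) = -Complex.I := by
      rw [Complex.exp_mul_I, ← Complex.ofReal_cos, ← Complex.ofReal_sin, hc2, hs2]
      simp
    have m1 : u θ α * Complex.exp ((φ : ℂ) * Complex.I) = Complex.I := by
      rw [hu, ← Complex.exp_add]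
      rw [show ((Complex.arg (c α) + ∑ j, (α j : ℝ) * θ j : ℝ) : ℂ) * Complex.I +
          (φ : ℂ) * Complex.I = ((φ + ψ θ α : ℝ) : ℂ) * Complex.I by
        simp only [hψ]; push_cast; ring]
      exact e1
    have m2 : u θ β * Complex.exp ((φ : ℂ) * Complex.I) = -Complex.I := by
      rw [hu, ← Complex.exp_add]
      rw [show ((Complex.arg (c β) + ∑ j, (β j : ℝ) * θ j : ℝ) : ℂ) * Complex.I +
          (φ : ℂ) * Complex.I = ((φ + ψ θ β : ℝ) : ℂ) * Complex.I by
        simp only [hψ]; push_cast; ring]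
      exact e2
    have hne : α ≠ β := by
      rintro rfl
      rw [m1] at m2
      norm_num [Complex.ext_iff] at m2
    have huv : u θ α = -u θ β := by
      apply mul_right_cancel₀ (Complex.exp_ne_zero ((φ : ℂ) * Complex.I))
      rw [m1, neg_mul, m2, neg_neg]
    exact hcon α hα β hβ hne huv
  have sinpm : ∀ x : ℝ, Real.cos x = 0 → Real.sin x = 1 ∨ Real.sin x = -1 := by
    intro x hx
    have h := Real.sin_sq_add_cos_sq x
    rw [hx] at h
    exact mul_self_eq_one_iff.mp (by nlinarith)
  have epslemma : ∀ φ : ℝ, ∃ ε : ℝ, (ε = 1 ∨ ε = -1) ∧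
      ∀ α ∈ A, Real.cos (φ + ψ θ α) = 0 → Real.sin (φ + ψ θ α) = ε := by
    intro φ
    by_cases h1 : ∃ α ∈ A, Real.cos (φ + ψ θ α) = 0 ∧ Real.sin (φ + ψ θ α) = -1
    · refine ⟨-1, Or.inr rfl, ?_⟩
      intro β hβ hcβ
      rcases sinpm _ hcβ with hs | hs
      · obtain ⟨α, hα, hcα, hsα⟩ := h1
        exact (antip β hβ α hα φ hcβ hs hcα hsα).elim
      · exact hs
    · refine ⟨1, Or.inl rfl, ?_⟩
      intro β hβ hcβ
      rcases sinpm _ hcβ with hs | hs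
      · exact hs
      · exact absurd ⟨β, hβ, hcβ, hs⟩ h1
  have strict : ∀ φ : ℝ, (∀ α ∈ A, 0 ≤ Real.cos (φ + ψ θ α)) →
      ∃ φ' : ℝ, ∀ α ∈ A, 0 < Real.cos (φ' + ψ θ α) := by
    intro φ hge
    by_cases hz : ∃ α ∈ A, Real.cos (φ + ψ θ α) = 0
    case neg =>
      exact ⟨φ, fun α hα => lt_of_le_of_ne (hge α hα) (fun h => hz ⟨α, hα, h.symm⟩)⟩
    case pos =>
      obtain ⟨ε, hε1, hεall⟩ := epslemma φ
      set m : ℝ := A.inf' hA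
        (fun α => if 0 < Real.cos (φ + ψ θ α) then Real.cos (φ + ψ θ α) else 1) with hm
      have hmpos : 0 < m := by
        rw [hm]
        rw [Finset.lt_inf'_iff]
        intro α hα
        split_ifs with h
        · exact h
        · norm_num
      have hmle : ∀ α ∈ A, 0 < Real.cos (φ + ψ θ α) → m ≤ Real.cos (φ + ψ θ α) := by
        intro α hα h
        have h2 := Finset.inf'_le
          (f := fun α => if 0 < Real.cos (φ + ψ θ α) then Real.cos (φ + ψ θ α) else 1) hα
        rwa [if_pos h] at h2
      set δ : ℝ := Real.arctan (m / 2) with hδ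
      have hδ1 : 0 < δ := by
        have := Real.arctan_strictMono (show (0:ℝ) < m / 2 by linarith)
        rwa [Real.arctan_zero] at this
      have hδcos : 0 < Real.cos δ := Real.cos_arctan_pos _
      have hδsin : Real.sin δ = m / 2 * Real.cos δ := by
        have ht : Real.tan δ = m / 2 := Real.tan_arctan _
        rw [Real.tan_eq_sin_div_cos] at ht
        field_simp at ht
        linarith [ht]
      have hδsinpos : 0 < Real.sin δ := by rw [hδsin]; positivity
      refine ⟨φ - ε * δ, ?_⟩
      intro α hα
      have expand : Real.cos (φ - ε * δ + ψ θ α) =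
          Real.cos (φ + ψ θ α) * Real.cos (ε * δ) + Real.sin (φ + ψ θ α) * Real.sin (ε * δ) := by
        rw [show φ - ε * δ + ψ θ α = (φ + ψ θ α) - ε * δ by ring, Real.cos_sub]
      rw [expand]
      rcases (hge α hα).lt_or_eq with hpos | h0
      · have h1 := hmle α hα hpos
        have h2 := Real.neg_one_le_sin (φ + ψ θ α)
        have h3 := Real.sin_le_one (φ + ψ θ α)
        rcases hε1 with rfl | rfl
        · rw [one_mul]
          nlinarith
        · rw [show (-1 : ℝ) * δ = -δ by ring, Real.cos_neg, Real.sin_neg]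
          nlinarith
      · have hs := hεall α hα h0.symm
        rw [← h0, hs]
        rcases hε1 with rfl | rfl
        · rw [one_mul]
          nlinarith
        · rw [show (-1 : ℝ) * δ = -δ by ring, Real.cos_neg, Real.sin_neg]
          nlinarith
  by_cases hθS : θ ∈ S
  · -- θ is not lopsided: show a neighborhood is contained in S
    have notS := (hSmem θ).mp hθS
    have Fneg : ∀ φ : ℝ, ∃ α ∈ A, Real.cos (φ + ψ θ α) < 0 := by
      intro φ
      by_contra hcontra
      push_neg at hcontra
      obtain ⟨φ', hφ'⟩ := strict φ hcontra
      obtain ⟨α₀, hα₀⟩ := hA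
      exact notS ⟨φ', fun α hα => (hφ' α hα).le, α₀, hα₀, hφ' α₀ hα₀⟩
    set F : ℝ → ℝ := fun φ => A.inf' hA (fun α => Real.cos (φ + ψ θ α)) with hF
    have Fcont : Continuous F := by
      apply Continuous.finset_inf'_apply hA
      intro α hα
      exact Real.continuous_cos.comp (continuous_id.add continuous_const)
    have Fneg' : ∀ φ, F φ < 0 := by
      intro φ
      obtain ⟨α, hα, hcα⟩ := Fneg φ
      exact lt_of_le_of_lt (Finset.inf'_le _ hα) hcα
    obtain ⟨φ₀, hφ₀mem, hφ₀max⟩ :=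
      (isCompact_Icc (a := (0:ℝ)) (b := 2 * Real.pi)).exists_isMaxOn
        ⟨0, Set.mem_Icc.mpr ⟨le_refl 0, by positivity⟩⟩ Fcont.continuousOn
    set ε : ℝ := -F φ₀ with hεdef
    have hεpos : 0 < ε := by
      rw [hεdef]
      linarith [Fneg' φ₀]
    set U : Set (Fin n → ℝ) := ⋂ α ∈ A, {θ' | |ψ θ' α - ψ θ α| < ε} with hU
    have hUopen : IsOpen U :=
      isOpen_biInter_finset fun α _ =>
        isOpen_lt (((contψ α).sub continuous_const).abs) continuous_const
    have hθU : θ ∈ U := Set.mem_iInter₂.mpr fun α _ => by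
      simp [abs_nonneg, hεpos]
    have hUS : U ⊆ S := by
      intro θ' hθ'
      rw [hSmem θ']
      rintro ⟨φ, hall, -⟩
      set k : ℤ := ⌊φ / (2 * Real.pi)⌋ with hk
      set φ₁ : ℝ := φ - 2 * Real.pi * k with hφ₁
      have hper : ∀ x : ℝ, Real.cos (φ₁ + x) = Real.cos (φ + x) := by
        intro x
        rw [show φ + x = (φ₁ + x) + (k : ℝ) * (2 * Real.pi) by rw [hφ₁]; ring,
          Real.cos_add_int_mul_two_pi]
      have hφ₁mem : φ₁ ∈ Set.Icc (0 : ℝ) (2 * Real.pi) := by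
        have h1 := Int.fract_nonneg (φ / (2 * Real.pi))
        have h2 := (Int.fract_lt_one (φ / (2 * Real.pi))).le
        have hpi := Real.pi_pos
        have heq : φ₁ = 2 * Real.pi * Int.fract (φ / (2 * Real.pi)) := by
          rw [hφ₁, hk, Int.fract]
          field_simp
        constructor
        · rw [heq]
          exact mul_nonneg (by positivity) h1
        · rw [heq]
          nlinarith
      obtain ⟨α, hα, hαeq⟩ := Finset.exists_mem_eq_inf' hA
        (fun α => Real.cos (φ₁ + ψ θ α))
      have hcα : Real.cos (φ₁ + ψ θ α) ≤ -ε := by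
        rw [← hαeq]
        have := hφ₀max hφ₁mem
        rw [hεdef, neg_neg]
        exact this
      have hclose : |ψ θ' α - ψ θ α| < ε := by
        have := Set.mem_iInter₂.mp hθ' α hα
        exact this
      have hlip := coslip (φ₁ + ψ θ' α) (φ₁ + ψ θ α)
      have habs : |(φ₁ + ψ θ' α) - (φ₁ + ψ θ α)| = |ψ θ' α - ψ θ α| := by
        congr 1
        ring
      rw [habs] at hlip
      have h5 : Real.cos (φ₁ + ψ θ' α) < 0 := by
        have h6 : Real.cos (φ₁ + ψ θ' α) - Real.cos (φ₁ + ψ θ α) ≤ |ψ θ' α - ψ θ α| :=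
          le_trans (le_abs_self _) hlip
        linarith
      have h7 := hall α hα
      rw [← hper (ψ θ' α)] at h7
      linarith
    have hint : θ ∈ interior S := mem_interior.mpr ⟨U, hUS, hUopen, hθU⟩
    exact hθni (interior_mono subset_closure hint)
  · -- θ is lopsided: a neighborhood avoids S
    rw [hSmem θ, not_not] at hθS
    obtain ⟨φ, hge, -⟩ := hθS
    obtain ⟨φ', hφ'⟩ := strict φ hge
    set V : Set (Fin n → ℝ) := ⋂ α ∈ A, {θ' | 0 < Real.cos (φ' + ψ θ' α)} with hV
    have hVopen : IsOpen V :=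
      isOpen_biInter_finset fun α _ =>
        isOpen_lt continuous_const (Real.continuous_cos.comp (continuous_const.add (contψ α)))
    have hθV : θ ∈ V := Set.mem_iInter₂.mpr fun α hα => hφ' α hα
    have hVS : V ⊆ Sᶜ := by
      intro θ' hθ'
      rw [Set.mem_compl_iff, hSmem θ', not_not]
      have h := Set.mem_iInter₂.mp hθ'
      obtain ⟨α₀, hα₀⟩ := hA
      exact ⟨φ', fun α hα => (h α hα).le, α₀, hα₀, h α₀ hα₀⟩
    have hext : θ ∈ interior Sᶜ := mem_interior.mpr ⟨V, hVS, hVopen, hθV⟩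
    rw [interior_compl] at hext
    exact hext hθc
end

section
/- With the setup of the order map: if θ ∈ ℝ^n is in the complement of the closed lopsided coamoeba of f, then the vector v(θ) = (Arg_π(c) + p(θ))·B lies in the interior of the zonotope 𝒵_B = {(π/2) Σ_{j=1}^N μ_j b_j : |μ_j| ≤ 1}, where b_1,...,b_N are the rows of B. -/
open Complex
open scoped Matrix

/-!
Rotating by the angle of the half-plane moves every `c_k e^{i⟨α_k,θ⟩}` into the right
half-plane, where its argument `δ_k` lies in `(-π/2, π/2)`; there the argument of a ratio is
the difference of arguments, so `arg_π(c_k e^{i⟨α_k,θ⟩} / c_i e^{i⟨α_i,θ⟩}) = δ_k - δ_i`.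
Hence `Arg_π(c) + p(θ)` differs from `δ` by a constant plus a linear function of the exponents
`α_k`, which the Gale dual `B` annihilates, so `v(θ) = δ·B`. As `B` has full column rank,
`μ ↦ μ·B` is an open map, and it sends the open cube `|μ_k| < π/2` into `𝒵_B`.
-/

namespace Complex

theorem arg_div_eq_sub_of_re_pos {z w : ℂ} (hz : 0 < z.re) (hw : 0 < w.re) :
    arg (z / w) = arg z - arg w := by
  have hz' := abs_lt.1 (abs_arg_lt_pi_div_two_iff.2 (Or.inl hz))
  have hw' := abs_lt.1 (abs_arg_lt_pi_div_two_iff.2 (Or.inl hw))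
  have hmem : arg z - arg w ∈ Set.Ioc (-Real.pi) Real.pi := ⟨by linarith, by linarith⟩
  have hz0 : z ≠ 0 := fun h => by simp [h] at hz
  have hw0 : w ≠ 0 := fun h => by simp [h] at hw
  rw [← Real.Angle.toReal_coe_eq_self_iff_mem_Ioc.2 hmem, Real.Angle.coe_sub,
    ← arg_div_coe_angle hz0 hw0, arg_coe_angle_toReal_eq_arg]

theorem arg_mul_exp_div_mul_exp {c d : ℂ} (hc : c ≠ 0) (hd : d ≠ 0) (s t : ℝ) :
    arg (c * exp (s * I) / (d * exp (t * I))) =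
      arg (exp ((arg c + s : ℝ) * I) / exp ((arg d + t : ℝ) * I)) := by
  have hpolar (z : ℂ) (r : ℝ) : z * exp (r * I) = ‖z‖ * exp ((arg z + r : ℝ) * I) := by
    conv_lhs => rw [← norm_mul_exp_arg_mul_I z]
    rw [mul_assoc, ← exp_add]
    push_cast
    ring_nf
  rw [hpolar c, hpolar d, mul_div_mul_comm, ← ofReal_div,
    arg_real_mul _ (div_pos (norm_pos_iff.2 hc) (norm_pos_iff.2 hd))]

end Complex

theorem sum_affine_mul_eq_zero {R ι κ ν : Type*} [CommRing R] [Fintype ι] [Fintype ν]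
    (A : ι → ν → R) (B : ι → κ → R) (hB1 : ∀ j, ∑ k, B k j = 0)
    (hB2 : ∀ l j, ∑ k, A k l * B k j = 0) (a : R) (θ : ν → R) (j : κ) :
    ∑ k, (a + ∑ l, A k l * θ l) * B k j = 0 := by
  simp only [add_mul, Finset.sum_add_distrib, ← Finset.mul_sum, hB1, mul_zero, zero_add,
    Finset.sum_mul]
  rw [Finset.sum_comm]
  refine Finset.sum_eq_zero fun l _ => ?_
  simp only [mul_right_comm _ (θ l), ← Finset.sum_mul, hB2, zero_mul]

theorem Matrix.vecMul_surjective_of_linearIndependent_transpose {K ι κ : Type*} [Field K]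
    [Fintype ι] [Fintype κ] {B : Matrix ι κ K} (hB : LinearIndependent K Bᵀ) :
    Function.Surjective fun μ => μ ᵥ* B := by
  have hrank : Bᵀ.rank = Fintype.card κ := hB.rank_matrix
  have hsurj : Function.Surjective Bᵀ.mulVecLin := by
    rw [← LinearMap.range_eq_top]
    apply Submodule.eq_top_of_finrank_eq
    rw [show Module.finrank K (LinearMap.range Bᵀ.mulVecLin) = Bᵀ.rank from rfl, hrank,
      Module.finrank_fintype_fun_eq_card]
  intro x
  obtain ⟨μ, hμ⟩ := hsurj x
  exact ⟨μ, by rwa [Matrix.mulVecLin_apply, Matrix.mulVec_transpose] at hμ⟩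

def zonotope {ι κ : Type*} [Fintype ι] (r : ℝ) (B : Matrix ι κ ℝ) : Set (κ → ℝ) :=
  {x | ∃ μ : ι → ℝ, (∀ k, |μ k| ≤ 1) ∧ ∀ j, x j = r * ∑ k, μ k * B k j}

theorem vecMul_mem_interior_zonotope {ι κ : Type*} [Fintype ι] [Fintype κ]
    {B : Matrix ι κ ℝ} (hB : LinearIndependent ℝ Bᵀ) {r : ℝ} (hr : 0 < r) {δ : ι → ℝ}
    (hδ : ∀ k, |δ k| < r) : δ ᵥ* B ∈ interior (zonotope r B) := by
  let T : (ι → ℝ) →L[ℝ] (κ → ℝ) := LinearMap.toContinuousLinearMap (Matrix.vecMulLinear B)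
  have hT : IsOpenMap T :=
    T.isOpenMap (Matrix.vecMul_surjective_of_linearIndependent_transpose hB ·)
  have hsub : T '' Metric.ball 0 r ⊆ zonotope r B := by
    rintro _ ⟨μ, hμ, rfl⟩
    rw [mem_ball_zero_iff, pi_norm_lt_iff hr] at hμ
    refine ⟨r⁻¹ • μ, fun k => ?_, fun j => ?_⟩
    · rw [Pi.smul_apply, smul_eq_mul, abs_mul, abs_inv, abs_of_pos hr, inv_mul_le_one₀ hr]
      exact (hμ k).le
    · simp only [T, LinearMap.coe_toContinuousLinearMap', Matrix.coe_vecMulLinear,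
        Matrix.vecMul, dotProduct, Pi.smul_apply, smul_eq_mul, Finset.mul_sum]
      exact Finset.sum_congr rfl fun k _ => by field_simp
  refine interior_maximal hsub (hT _ Metric.isOpen_ball) ⟨δ, ?_, rfl⟩
  rw [mem_ball_zero_iff, pi_norm_lt_iff hr]
  simpa using hδ

/-- If `θ` lies in the complement of the closed lopsided coamoeba of `f` (all unit
vectors `e^{i(arg c_k + ⟨α_k,θ⟩)}` lie in one open half-plane), then the vector
`v(θ) = (Arg_π(c) + p(θ))·B` lies in the interior of the zonotope
`𝒵_B = {(π/2)∑ μ_j b_j : |μ_j| ≤ 1}`. -/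
theorem stmt8 (n N m : ℕ) (α : Fin N → Fin n → ℤ) (c : Fin N → ℂ) (hc : ∀ k, c k ≠ 0)
    (B : Fin N → Fin m → ℤ)
    (hB1 : ∀ j, ∑ k, B k j = 0)
    (hB2 : ∀ l j, ∑ k, α k l * B k j = 0)
    (hBrank : LinearIndependent ℝ (fun j : Fin m => fun k : Fin N => (B k j : ℝ)))
    (i : Fin N)
    (p : Fin N → (Fin n → ℝ) → ℝ)
    (hp : ∀ k θ, p k θ =
      Complex.arg (c k * Complex.exp (((∑ l, (α k l : ℝ) * θ l : ℝ) : ℂ) * Complex.I) /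
          (c i * Complex.exp (((∑ l, (α i l : ℝ) * θ l : ℝ) : ℂ) * Complex.I))) -
        Complex.arg (c k) + Complex.arg (c i) -
        ∑ l, ((α k l - α i l : ℤ) : ℝ) * θ l)
    (θ : Fin n → ℝ)
    (hθ : ∃ φ : ℝ, ∀ k, 0 < (Complex.exp ((φ : ℂ) * Complex.I) *
        Complex.exp (((Complex.arg (c k) + ∑ l, (α k l : ℝ) * θ l : ℝ) : ℂ) * Complex.I)).re) :
    (fun j => ∑ k, (Complex.arg (c k) + p k θ) * (B k j : ℝ)) ∈
      interior {x : Fin m → ℝ | ∃ μ : Fin N → ℝ, (∀ k, |μ k| ≤ 1) ∧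
        ∀ j, x j = Real.pi / 2 * ∑ k, μ k * (B k j : ℝ)} := by
  obtain ⟨φ, hφ⟩ := hθ
  set s : Fin N → ℝ := fun k => ∑ l, (α k l : ℝ) * θ l with hs
  set w : Fin N → ℂ := fun k => exp (φ * I) * exp ((arg (c k) + s k : ℝ) * I)
  have hw : ∀ k, 0 < (w k).re := hφ
  have harg : ∀ k, arg (c k * exp (s k * I) / (c i * exp (s i * I))) = arg (w k) - arg (w i) :=
    fun k => by
      rw [arg_mul_exp_div_mul_exp (hc k) (hc i), ← mul_div_mul_left _ _ (exp_ne_zero (φ * I)),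
        arg_div_eq_sub_of_re_pos (hw k) (hw i)]
  have hterm : ∀ k, arg (c k) + p k θ =
      arg (w k) + ((arg (c i) - arg (w i) + s i) + ∑ l, (α k l : ℝ) * (-θ l)) := fun k => by
    rw [hp, harg]
    simp only [hs, Int.cast_sub, sub_mul, Finset.sum_sub_distrib, mul_neg, Finset.sum_neg_distrib]
    ring
  have hB1' : ∀ j, ∑ k, (B k j : ℝ) = 0 := fun j => by exact_mod_cast hB1 j
  have hB2' : ∀ l j, ∑ k, (α k l : ℝ) * B k j = 0 := fun l j => by exact_mod_cast hB2 l j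
  have hv : ∀ j, ∑ k, (arg (c k) + p k θ) * (B k j : ℝ) = ∑ k, arg (w k) * (B k j : ℝ) := by
    intro j
    rw [Finset.sum_congr rfl fun k _ => by rw [hterm k, add_mul], Finset.sum_add_distrib,
      sum_affine_mul_eq_zero _ _ hB1' hB2', add_zero]
  rw [funext hv]
  exact vecMul_mem_interior_zonotope (B := Matrix.of fun k j => (B k j : ℝ)) hBrank
    Real.pi_div_two_pos fun k => abs_arg_lt_pi_div_two_iff.2 (Or.inl (hw k))
end

section
/- Let A be an (n+1)×(n+2) integer matrix (a circuit) with top row all ones and all maximal minors nonzero, with columns (1,α_0),...,(1,α_{n+1}). Then Σ_{j=0}^{n+1} Vol(A_{\hat j}) = 2 n! Vol(Δ), where Vol(A_{\hat j}) = |det(A_{\hat j})| is the normalized volume of the simplex spanned by the points α_k, k ≠ j, and Vol(Δ) is the Euclidean volume of the convex hull Δ = Conv(α_0,...,α_{n+1}), so that n! Vol(Δ) is its normalized volume. -/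
open Matrix MeasureTheory Finset Pointwise

namespace Stmt14Aux

def corner (n : ℕ) : Set (Fin n → ℝ) := {x | (∀ i, 0 ≤ x i) ∧ ∑ i, x i ≤ 1}

lemma measurableSet_corner (n : ℕ) : MeasurableSet (corner n) := by
  have : corner n = (⋂ i, {x : Fin n → ℝ | 0 ≤ x i}) ∩ {x | ∑ i, x i ≤ 1} := by
    ext x; simp [corner, Set.mem_iInter]
  rw [this]
  exact (MeasurableSet.iInter fun i =>
    measurableSet_le measurable_const (measurable_pi_apply i)).inter
    (measurableSet_le (by fun_prop) measurable_const)

lemma smul_corner {n : ℕ} {r : ℝ} (hr : 0 < r) :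
    {y : Fin n → ℝ | (∀ i, 0 ≤ y i) ∧ ∑ i, y i ≤ r} = r • corner n := by
  ext y
  constructor
  · rintro ⟨h0, hs⟩
    refine ⟨r⁻¹ • y, ⟨fun i => mul_nonneg (inv_nonneg.2 hr.le) (h0 i), ?_⟩, by simp [smul_smul, mul_inv_cancel₀ hr.ne']⟩
    simp only [Pi.smul_apply, smul_eq_mul, ← Finset.mul_sum]
    rw [inv_mul_le_iff₀ hr, mul_one]
    exact hs
  · rintro ⟨z, ⟨h0, hs⟩, rfl⟩
    refine ⟨fun i => mul_nonneg hr.le (h0 i), ?_⟩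
    simp only [Pi.smul_apply, smul_eq_mul, ← Finset.mul_sum]
    calc r * ∑ i, z i ≤ r * 1 := by exact mul_le_mul_of_nonneg_left hs hr.le
    _ = r := mul_one r

lemma volume_corner : ∀ n, volume (corner n) = ENNReal.ofReal (1 / n.factorial) := by
  intro n
  induction n with
  | zero =>
    have : corner 0 = Set.univ := by
      ext x; simp [corner]
    rw [this]
    simp [MeasureTheory.volume_pi, MeasureTheory.Measure.pi_univ]
  | succ n ih =>
    set e := MeasurableEquiv.piFinSuccAbove (fun _ : Fin (n+1) => ℝ) 0 with he
    have hp := MeasureTheory.volume_preserving_piFinSuccAbove (fun _ : Fin (n+1) => ℝ) 0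
    set Sset : Set (ℝ × (Fin n → ℝ)) :=
      {q | 0 ≤ q.1 ∧ (∀ i, 0 ≤ q.2 i) ∧ q.1 + ∑ i, q.2 i ≤ 1} with hSset
    have hS : e.symm ⁻¹' corner (n+1) = Sset := by
      ext ⟨t, y⟩
      have h1 : ∀ i, Fin.insertNth (α := fun _ => ℝ) (0 : Fin (n+1)) t y
          ((0 : Fin (n+1)).succAbove i) = y i :=
        fun i => Fin.insertNth_apply_succAbove (α := fun _ => ℝ) (0 : Fin (n+1)) t y i
      have h2 : Fin.insertNth (α := fun _ => ℝ) (0 : Fin (n+1)) t y 0 = t :=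
        Fin.insertNth_apply_same (α := fun _ => ℝ) (0 : Fin (n+1)) t y
      have hsum : ∑ i, Fin.insertNth (α := fun _ => ℝ) (0 : Fin (n+1)) t y i = t + ∑ i, y i := by
        rw [Fin.sum_univ_succAbove _ 0, h2]
        exact congrArg _ (Finset.sum_congr rfl fun i _ => h1 i)
      show Fin.insertNth 0 t y ∈ corner (n+1) ↔ _
      constructor
      · rintro ⟨h0, hs⟩
        refine ⟨by rw [← h2]; exact h0 0, fun i => by show (0:ℝ) ≤ y i; rw [← h1 i]; exact h0 _,
          by rw [← hsum]; exact hs⟩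
      · rintro ⟨ht, h0, hs⟩
        refine ⟨fun i => ?_, by rw [hsum]; exact hs⟩
        rcases eq_or_ne i 0 with rfl | hi
        · rw [h2]; exact ht
        · obtain ⟨j, rfl⟩ := Fin.exists_succAbove_eq hi
          rw [h1]; exact h0 j
    have hmeasS : MeasurableSet Sset := by
      rw [← hS]; exact e.symm.measurable (measurableSet_corner _)
    have h1 : volume (corner (n+1)) = volume Sset := by
      rw [← hS]
      exact ((MeasurePreserving.symm e hp).measure_preimage
        (measurableSet_corner _).nullMeasurableSet).symm
    rw [h1, MeasureTheory.Measure.volume_eq_prod, Measure.prod_apply hmeasS]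
    have hfr : Module.finrank ℝ (Fin n → ℝ) = n := by
      simp [Module.finrank_pi]
    have hslice : ∀ t : ℝ, t ≠ 1 →
        volume (Prod.mk t ⁻¹' Sset)
        = (Set.Icc (0:ℝ) 1).indicator
            (fun t => ENNReal.ofReal ((1-t)^n) * volume (corner n)) t := by
      intro t ht
      have hpre : Prod.mk t ⁻¹' Sset
          = {y : Fin n → ℝ | 0 ≤ t ∧ (∀ i, 0 ≤ y i) ∧ t + ∑ i, y i ≤ 1} := rfl
      rcases lt_or_ge t 0 with h | h
      · rw [Set.indicator_of_notMem (by simp [h.not_ge]), hpre]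
        convert measure_empty
        · ext y; simp [h.not_ge]
        · infer_instance
      · rcases lt_or_ge 1 t with hgt | hle
        · rw [Set.indicator_of_notMem (by simp [hgt.not_ge]), hpre]
          convert measure_empty
          · ext y
            simp only [Set.mem_setOf_eq, Set.mem_empty_iff_false, iff_false, not_and]
            intro _ h0 
            have : (0:ℝ) ≤ ∑ i, y i := Finset.sum_nonneg fun i _ => h0 i
            push_neg
            linarith
          · infer_instance
        · have h1t : t < 1 := lt_of_le_of_ne hle ht
          rw [Set.indicator_of_mem (Set.mem_Icc.2 ⟨h, hle⟩)]
          have hsm : Prod.mk t ⁻¹' Sset = (1 - t) • corner n := by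
            rw [hpre, ← smul_corner (by linarith : (0:ℝ) < 1 - t)]
            ext y; simp only [Set.mem_setOf_eq]
            constructor
            · rintro ⟨-, h0, hs⟩; exact ⟨h0, by linarith⟩
            · rintro ⟨h0, hs⟩; exact ⟨h, h0, by linarith⟩
          rw [hsm, Measure.addHaar_smul_of_nonneg volume (by linarith) (corner n), hfr]
    have hae : (fun t => volume (Prod.mk t ⁻¹' Sset)) =ᵐ[volume]
        (Set.Icc (0:ℝ) 1).indicator
          (fun t => ENNReal.ofReal ((1-t)^n) * volume (corner n)) := by
      have hone : ∀ᵐ t : ℝ, t ∉ ({1} : Set ℝ) :=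
        measure_eq_zero_iff_ae_notMem.1 Real.volume_singleton
      filter_upwards [hone] with t ht
      exact hslice t (by simpa using ht)
    rw [lintegral_congr_ae hae, lintegral_indicator measurableSet_Icc _,
      lintegral_mul_const _ (by fun_prop)]
    have hkey : ∫⁻ t in Set.Icc (0:ℝ) 1, ENNReal.ofReal ((1-t)^n)
        = ENNReal.ofReal (1/((n:ℝ)+1)) := by
      rw [← MeasureTheory.ofReal_integral_eq_lintegral_ofReal]
      · congr 1
        have hIcc : ∫ t in Set.Icc (0:ℝ) 1, (1-t)^n = ∫ t in (0:ℝ)..1, (1-t)^n := by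
          rw [intervalIntegral.integral_of_le zero_le_one,
            MeasureTheory.integral_Icc_eq_integral_Ioc]
        rw [hIcc, intervalIntegral.integral_comp_sub_left (fun x => x^n) 1]
        simp [integral_pow]
      · exact ((continuous_const.sub continuous_id').pow n).integrableOn_Icc
      · exact (ae_restrict_iff' measurableSet_Icc).2
          (MeasureTheory.ae_of_all _ fun t ht => pow_nonneg (by linarith [ht.2]) n)
    rw [hkey, ih, ← ENNReal.ofReal_mul (by positivity)]
    congr 1
    rw [Nat.factorial_succ]
    push_cast
    rw [div_mul_div_comm, one_mul]

section Hull

variable {E : Type*} [AddCommGroup E] [Module ℝ E]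

lemma mem_convexHull_iff_weights {m : ℕ} (p : Fin m → E) (x : E) :
    x ∈ convexHull ℝ (Set.range p) ↔
      ∃ w : Fin m → ℝ, (∀ i, 0 ≤ w i) ∧ ∑ i, w i = 1 ∧ ∑ i, w i • p i = x := by
  rw [convexHull_range_eq_exists_affineCombination]
  constructor
  · rintro ⟨s, w, hw0, hw1, rfl⟩
    classical
    refine ⟨fun i => if i ∈ s then w i else 0,
      fun i => by dsimp only; split
                  · exact hw0 _ ‹_›
                  · exact le_refl 0, ?_, ?_⟩
    · rw [Finset.sum_ite_mem, Finset.univ_inter, hw1]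
    · rw [Finset.affineCombination_eq_linear_combination s p w hw1]
      simp only [ite_smul, zero_smul, Finset.sum_ite_mem, Finset.univ_inter]
  · rintro ⟨w, hw0, hw1, rfl⟩
    exact ⟨Finset.univ, w, fun i _ => hw0 i, hw1,
      by rw [Finset.affineCombination_eq_linear_combination _ _ _ hw1]⟩

lemma affine_key {m : ℕ} (p : Fin (m+1) → E) (x : Fin m → ℝ) :
    p 0 + ∑ i, x i • (p i.succ - p 0)
      = (1 - ∑ i, x i) • p 0 + ∑ i, x i • p i.succ := by
  rw [sub_smul, one_smul]
  simp only [smul_sub]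
  rw [Finset.sum_sub_distrib, ← Finset.sum_smul]
  abel

lemma convexHull_eq_image {m : ℕ} (p : Fin (m+1) → E) :
    convexHull ℝ (Set.range p)
    = (fun x : Fin m → ℝ => p 0 + ∑ i, x i • (p i.succ - p 0)) '' corner m := by
  ext v
  rw [mem_convexHull_iff_weights]
  constructor
  · rintro ⟨w, hw0, hw1, rfl⟩
    rw [Fin.sum_univ_succ] at hw1
    refine ⟨fun i => w i.succ, ⟨fun i => hw0 _, by linarith [hw0 0]⟩, ?_⟩
    dsimp only
    rw [affine_key]
    rw [Fin.sum_univ_succ (f := fun i => w i • p i)]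
    have : 1 - ∑ i : Fin m, w i.succ = w 0 := by linarith
    rw [this]
  · rintro ⟨x, ⟨hx0, hxs⟩, rfl⟩
    refine ⟨Fin.cons (1 - ∑ i, x i) x, fun i => ?_, ?_, ?_⟩
    · rcases eq_or_ne i 0 with rfl | hi
      · rw [Fin.cons_zero]; linarith
      · obtain ⟨j, rfl⟩ := Fin.eq_succ_of_ne_zero hi
        rw [Fin.cons_succ]; exact hx0 j
    · rw [Fin.sum_univ_succ]
      simp only [Fin.cons_zero, Fin.cons_succ]
      ring
    · rw [Fin.sum_univ_succ]
      simp only [Fin.cons_zero, Fin.cons_succ]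
      rw [affine_key]

end Hull

lemma volume_convexHull_simplex {n : ℕ} (p : Fin (n+1) → (Fin n → ℝ)) :
    volume (convexHull ℝ (Set.range p))
      = ENNReal.ofReal
          (|(Matrix.of fun l i => p i.succ l - p 0 l).det| / n.factorial) := by
  classical
  set M : Matrix (Fin n) (Fin n) ℝ := Matrix.of fun l i => p i.succ l - p 0 l with hM
  have hfun : (fun x : Fin n → ℝ => p 0 + ∑ i, x i • (p i.succ - p 0))
      = (fun y => p 0 + y) ∘ (Matrix.toLin' M) := by
    funext x
    simp only [Function.comp_apply]
    congr 1
    funext l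
    simp only [Matrix.toLin'_apply, Matrix.mulVec, dotProduct, hM, Matrix.of_apply,
      Finset.sum_apply, Pi.smul_apply, smul_eq_mul, Pi.sub_apply]
    exact Finset.sum_congr rfl fun i _ => by ring
  rw [convexHull_eq_image p, hfun, Set.image_comp]
  have hvadd : (fun y : Fin n → ℝ => p 0 + y) '' ((Matrix.toLin' M) '' corner n)
      = p 0 +ᵥ ((Matrix.toLin' M) '' corner n) := rfl
  rw [hvadd, measure_vadd, Measure.addHaar_image_linearMap, LinearMap.det_toLin', volume_corner,
    ← ENNReal.ofReal_mul (abs_nonneg _)]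
  rw [mul_one_div]

lemma det_bordered {n : ℕ} (p : Fin (n+1) → (Fin n → ℝ)) :
    (Matrix.of fun i k => Fin.cons (1:ℝ) (fun l => p k l) i).det
      = (Matrix.of fun l i => p i.succ l - p 0 l).det := by
  classical
  set B : Matrix (Fin (n+1)) (Fin (n+1)) ℝ :=
    Matrix.of fun i k => Fin.cons (α := fun _ => ℝ) (1:ℝ) (fun l => p k l) i with hB
  set E : Matrix (Fin (n+1)) (Fin (n+1)) ℝ :=
    Matrix.of fun k j => (if k = j then (1:ℝ) else 0)
      + (if j = 0 ∧ k ≠ 0 then -1 else 0) with hE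
  have htri : E.BlockTriangular OrderDual.toDual := by
    intro i j hij
    have hij' : i < j := hij
    simp only [hE, Matrix.of_apply]
    rw [if_neg (by exact fun h => absurd h (ne_of_lt hij')), if_neg]
    · ring
    · rintro ⟨rfl, -⟩
      exact absurd hij' (by simp [Fin.not_lt, Fin.zero_le])
  have hdetE : E.det = 1 := by
    rw [Matrix.det_of_lowerTriangular E htri]
    apply Finset.prod_eq_one
    intro i _
    simp [hE]
  have hC : E * Bᵀ = Matrix.of fun k i => Bᵀ k i + (if k ≠ 0 then -(Bᵀ 0 i) else 0) := by
    ext k i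
    simp only [Matrix.mul_apply, hE, Matrix.of_apply, add_mul, ite_mul, one_mul, zero_mul,
      neg_mul]
    rw [Finset.sum_add_distrib]
    congr 1
    · rw [Finset.sum_ite_eq]
      simp
    · by_cases hk : k = 0
      · subst hk; simp
      · simp only [hk, ne_eq, not_false_eq_true, and_true, if_true]
        rw [Finset.sum_ite_eq']
        simp
  have hdetC : (E * Bᵀ).det = B.det := by
    rw [Matrix.det_mul, hdetE, one_mul, Matrix.det_transpose]
  have hcol : ∀ i : Fin n, (E * Bᵀ) i.succ 0 = 0 := by
    intro i
    rw [hC]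
    simp [hB, Fin.succ_ne_zero]
  have h00 : (E * Bᵀ) 0 0 = 1 := by
    rw [hC]
    simp [hB]
  rw [← hdetC, Matrix.det_succ_column_zero]
  rw [Finset.sum_eq_single 0]
  · rw [h00]
    have hsub : (E * Bᵀ).submatrix (Fin.succAbove 0) Fin.succ
        = (Matrix.of fun l i => p i.succ l - p 0 l)ᵀ := by
      ext k i
      rw [Matrix.submatrix_apply, Fin.succAbove_zero, hC]
      simp [hB, sub_eq_add_neg, Fin.succ_ne_zero]
    rw [hsub, Matrix.det_transpose]
    simp
  · intro b _ hb
    obtain ⟨j, rfl⟩ := Fin.eq_succ_of_ne_zero hb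
    rw [hcol]
    ring
  · simp

lemma hull_cover {E : Type*} [AddCommGroup E] [Module ℝ E] {m : ℕ}
    (P : Fin (m+2) → E) (c : Fin (m+2) → ℝ)
    (hc0 : ∑ j, c j = 0) (hcP : ∑ j, c j • P j = 0) (hcne : ∀ j, c j ≠ 0) :
    convexHull ℝ (Set.range P)
      = ⋃ j ∈ Finset.univ.filter (fun j => 0 < c j),
          convexHull ℝ (Set.range fun k => P (j.succAbove k)) := by
  classical
  apply Set.Subset.antisymm
  · intro x hx
    rw [mem_convexHull_iff_weights] at hx
    obtain ⟨w, hw0, hw1, rfl⟩ := hx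
    have hJne : (Finset.univ.filter fun j => 0 < c j).Nonempty := by
      by_contra h
      rw [Finset.not_nonempty_iff_eq_empty, Finset.filter_eq_empty_iff] at h
      have hneg : ∑ j, c j < 0 :=
        Finset.sum_neg (fun j _ => lt_of_le_of_ne (not_lt.1 (h (Finset.mem_univ j))) (hcne j))
          Finset.univ_nonempty
      exact absurd hc0 (ne_of_lt hneg)
    obtain ⟨j0, hj0mem, hj0min⟩ := Finset.exists_min_image _ (fun j => w j / c j) hJne
    have hcj0 : 0 < c j0 := (Finset.mem_filter.1 hj0mem).2
    set t := w j0 / c j0 with htdef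
    have ht : 0 ≤ t := div_nonneg (hw0 j0) hcj0.le
    set μ : Fin (m+2) → ℝ := fun j => w j - t * c j with hμ
    have hμ0 : ∀ j, 0 ≤ μ j := by
      intro j
      rcases lt_or_ge 0 (c j) with h | h
      · have hmin' : t ≤ w j / c j := hj0min j (Finset.mem_filter.2 ⟨Finset.mem_univ j, h⟩)
        rw [le_div_iff₀ h] at hmin'
        simpa [hμ] using sub_nonneg.2 hmin'
      · have h1 : t * c j ≤ 0 := mul_nonpos_of_nonneg_of_nonpos ht h
        have h2 := hw0 j
        simp only [hμ]
        linarith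
    have hμj0 : μ j0 = 0 := by
      simp only [hμ, htdef]
      field_simp
      ring
    have hμsum : ∑ j, μ j = 1 := by
      simp only [hμ]
      rw [Finset.sum_sub_distrib, ← Finset.mul_sum, hc0, hw1, mul_zero, sub_zero]
    have hμpt : ∑ j, μ j • P j = ∑ j, w j • P j := by
      simp only [hμ, sub_smul, mul_smul]
      rw [Finset.sum_sub_distrib, ← Finset.smul_sum, hcP, smul_zero, sub_zero]
    refine Set.mem_biUnion hj0mem ?_
    rw [mem_convexHull_iff_weights]
    refine ⟨fun k => μ (j0.succAbove k), fun k => hμ0 _, ?_, ?_⟩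
    · have := Fin.sum_univ_succAbove μ j0
      rw [hμj0, zero_add] at this
      rw [← this, hμsum]
    · have := Fin.sum_univ_succAbove (fun j => μ j • P j) j0
      rw [hμj0, zero_smul, zero_add] at this
      rw [← this, hμpt]
  · refine Set.iUnion₂_subset fun j _ => convexHull_mono ?_
    rintro y ⟨k, rfl⟩
    exact ⟨j.succAbove k, rfl⟩

lemma null_small {n : ℕ} (P : Fin (n+2) → (Fin n → ℝ)) (s : Finset (Fin (n+2)))
    (hcard : s.card ≤ n) :
    volume (convexHull ℝ (P '' ↑s)) = 0 := by
  classical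
  rcases s.eq_empty_or_nonempty with rfl | hne
  · simp
  obtain ⟨m, hm⟩ : ∃ m, s.card = m + 1 :=
    ⟨s.card - 1, (Nat.succ_pred_eq_of_pos (Finset.card_pos.2 hne)).symm⟩
  have hfin : Module.finrank ℝ (vectorSpan ℝ (P '' ↑s)) ≤ m := by
    have := finrank_vectorSpan_image_finset_le (k := ℝ) P s hm
    rwa [Finset.coe_image] at this
  have hne_top : affineSpan ℝ (P '' ↑s) ≠ ⊤ := by
    intro htop
    have hd : (affineSpan ℝ (P '' ↑s)).direction = ⊤ := by rw [htop]; exact AffineSubspace.direction_top ℝ _ _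
    rw [direction_affineSpan] at hd
    rw [hd] at hfin
    simp only [finrank_top, Module.finrank_pi, Fintype.card_fin] at hfin
    omega
  refine measure_mono_null ?_ (Measure.addHaar_affineSubspace volume _ hne_top)
  exact (convexHull_min (subset_affineSpan ℝ _) (AffineSubspace.convex _))

end Stmt14Aux


open Stmt14Aux in

/-- For a circuit `α₀, …, α_{n+1} ∈ ℤⁿ` (all maximal minors of `A` nonzero), the sum of
the normalized volumes `|det A_ĵ|` of the `n+2` facet simplices equals twice the
normalized volume `2·n!·Vol(Δ)` of the convex hull `Δ` of the points. -/
theorem stmt14 (n : ℕ) (α : Fin (n + 2) → Fin n → ℤ)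
    (Ahat : Fin (n + 2) → Matrix (Fin (n + 1)) (Fin (n + 1)) ℝ)
    (hAhat : ∀ j, Ahat j =
      Matrix.of fun i k => Fin.cons (1 : ℝ) (fun l => (α (j.succAbove k) l : ℝ)) i)
    (hmin : ∀ j, (Ahat j).det ≠ 0) :
    ∑ j, |(Ahat j).det| =
      2 * (n.factorial : ℝ) *
        (MeasureTheory.volume
          (convexHull ℝ (Set.range fun k => fun l => (α k l : ℝ)))).toReal := by
  classical
  set P : Fin (n + 2) → Fin n → ℝ := fun k => fun l => (α k l : ℝ) with hP
  set A : Matrix (Fin (n+1)) (Fin (n+2)) ℝ :=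
    Matrix.of fun i j => Fin.cons (α := fun _ => ℝ) 1 (fun l => P j l) i with hA
  set c : Fin (n+2) → ℝ := fun j => (-1:ℝ)^(j:ℕ) * (Ahat j).det with hc
  have hcne : ∀ j, c j ≠ 0 := fun j =>
    mul_ne_zero (pow_ne_zero _ (by norm_num)) (hmin j)
  have hAhat' : ∀ j : Fin (n+2), Ahat j = Matrix.of fun i k => A i (j.succAbove k) := by
    intro j
    rw [hAhat j]
    rfl
  have hker : ∀ r, ∑ j, c j * A r j = 0 := by
    intro r
    set M : Matrix (Fin (n+2)) (Fin (n+2)) ℝ :=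
      Matrix.of (Fin.cons (α := fun _ => Fin (n+2) → ℝ) (A r) (fun i => A i)) with hM
    have hdup : M.det = 0 := by
      apply Matrix.det_zero_of_row_eq (i := (0 : Fin (n+2))) (j := r.succ)
        (Fin.succ_ne_zero r).symm
      show M 0 = M r.succ
      funext j
      simp [hM]
    have hexp := Matrix.det_succ_row_zero M
    rw [hdup] at hexp
    have hsub : ∀ j : Fin (n+2), M.submatrix Fin.succ j.succAbove = Ahat j := by
      intro j
      rw [hAhat' j]
      ext i k
      simp [hM]
    calc ∑ j, c j * A r j
        = ∑ j : Fin (n+2), (-1:ℝ)^(j:ℕ) * M 0 j * (M.submatrix Fin.succ j.succAbove).det := by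
          refine Finset.sum_congr rfl fun j _ => ?_
          rw [hsub j]
          have hM0 : M 0 j = A r j := by simp [hM]
          rw [hM0, hc]
          ring
      _ = 0 := hexp.symm
  have hA0 : ∀ j, A 0 j = 1 := fun j => rfl
  have hAl : ∀ (l : Fin n) j, A l.succ j = P j l := fun l j => by simp [hA]
  have hsumc : ∑ j, c j = 0 := by
    have h := hker 0
    simpa [hA0] using h
  have hptc : ∀ l : Fin n, ∑ j, c j * P j l = 0 := by
    intro l
    have h := hker l.succ
    simpa [hAl] using h
  have hcP : ∑ j, c j • P j = 0 := by
    funext l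
    rw [Finset.sum_apply]
    simpa using hptc l
  have huniq : ∀ w : Fin (n+2) → ℝ, (∑ j, w j = 0) → (∀ l, ∑ j, w j * P j l = 0) →
      ∀ j0, w j0 = 0 → w = 0 := by
    intro w hw0 hwl j0 hj0
    have hwA : ∀ r, ∑ j, w j * A r j = 0 := by
      intro r
      refine Fin.cases ?_ ?_ r
      · simpa [hA0] using hw0
      · intro l
        simpa [hAl] using hwl l
    have hv : (Ahat j0) *ᵥ (fun k => w (j0.succAbove k)) = 0 := by
      funext i
      have h := hwA i
      rw [Fin.sum_univ_succAbove (fun j => w j * A i j) j0, hj0, zero_mul, zero_add] at h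
      rw [hAhat' j0]
      simp only [Matrix.mulVec, dotProduct, Matrix.of_apply, Pi.zero_apply]
      rw [← h]
      exact Finset.sum_congr rfl fun k _ => mul_comm _ _
    have hz := Matrix.eq_zero_of_mulVec_eq_zero (hmin j0) hv
    funext j
    rcases eq_or_ne j j0 with rfl | hj
    · exact hj0
    · obtain ⟨k, rfl⟩ := Fin.exists_succAbove_eq hj
      exact congrFun hz k
  have hker1 : ∀ w : Fin (n+2) → ℝ, (∑ j, w j = 0) → (∀ l, ∑ j, w j * P j l = 0) →
      ∀ j0, w = fun j => (w j0 / c j0) * c j := by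
    intro w hw0 hwl j0
    set t := w j0 / c j0 with htdef
    have h1 : ∑ j, (w j - t * c j) = 0 := by
      rw [Finset.sum_sub_distrib, ← Finset.mul_sum, hw0, hsumc]
      ring
    have h2 : ∀ l, ∑ j, (w j - t * c j) * P j l = 0 := by
      intro l
      calc ∑ j, (w j - t * c j) * P j l
          = ∑ j, w j * P j l - t * ∑ j, c j * P j l := by
            simp only [sub_mul, mul_assoc]
            rw [Finset.sum_sub_distrib, ← Finset.mul_sum]
        _ = 0 := by rw [hwl l, hptc l, mul_zero, sub_zero]
    have h3 : w j0 - t * c j0 = 0 := by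
      rw [htdef, div_mul_cancel₀ _ (hcne j0), sub_self]
    have h4 := huniq _ h1 h2 j0 h3
    funext j
    have h5 := congrFun h4 j
    simp only [Pi.zero_apply] at h5
    linarith [h5]
  set S : Fin (n+2) → Set (Fin n → ℝ) :=
    fun j => convexHull ℝ (Set.range fun k => P (j.succAbove k)) with hS
  have hvolS : ∀ j, volume (S j) = ENNReal.ofReal (|(Ahat j).det| / n.factorial) := by
    intro j
    have h := volume_convexHull_simplex (fun k => P (j.succAbove k))
    have hdb : (Matrix.of fun i k =>
          Fin.cons (α := fun _ => ℝ) (1:ℝ) (fun l => P (j.succAbove k) l) i).det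
        = (Matrix.of fun l i => P (j.succAbove i.succ) l - P (j.succAbove 0) l).det :=
      det_bordered (fun k => P (j.succAbove k))
    have hBA : (Matrix.of fun i k =>
        Fin.cons (α := fun _ => ℝ) (1:ℝ) (fun l => P (j.succAbove k) l) i) = Ahat j := by
      rw [hAhat j]
    rw [hS]
    dsimp only
    rw [h, ← hdb, hBA]
  have hScomp : ∀ j, IsCompact (S j) := fun j =>
    (Set.finite_range _).isCompact_convexHull ℝ
  have hSnm : ∀ j, MeasureTheory.NullMeasurableSet (S j) :=
    fun j => ((hScomp j).isClosed.measurableSet).nullMeasurableSet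
  -- intersections are null
  have hinter : ∀ j k : Fin (n+2), j ≠ k → 0 < c j * c k → volume (S j ∩ S k) = 0 := by
    intro j k hjk hsign
    set s : Finset (Fin (n+2)) := (Finset.univ.erase j).erase k with hsdef
    have hsubset : S j ∩ S k ⊆ convexHull ℝ (P '' ↑s) := by
      rintro x ⟨hxj, hxk⟩
      rw [hS, mem_convexHull_iff_weights] at hxj hxk
      obtain ⟨u, hu0, hu1, hux⟩ := hxj
      obtain ⟨v, hv0, hv1, hvx⟩ := hxk
      set W : Fin (n+2) → ℝ := Fin.insertNth (α := fun _ => ℝ) j 0 u with hW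
      set V : Fin (n+2) → ℝ := Fin.insertNth (α := fun _ => ℝ) k 0 v with hV
      have hWj : W j = 0 := Fin.insertNth_apply_same (α := fun _ => ℝ) j 0 u
      have hVk : V k = 0 := Fin.insertNth_apply_same (α := fun _ => ℝ) k 0 v
      have hWs : ∀ i, W (j.succAbove i) = u i :=
        fun i => Fin.insertNth_apply_succAbove (α := fun _ => ℝ) j 0 u i
      have hVs : ∀ i, V (k.succAbove i) = v i :=
        fun i => Fin.insertNth_apply_succAbove (α := fun _ => ℝ) k 0 v i
      have hW0 : ∀ i, 0 ≤ W i := by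
        intro i
        rcases eq_or_ne i j with rfl | hij
        · rw [hWj]
        · obtain ⟨m, rfl⟩ := Fin.exists_succAbove_eq hij
          rw [hWs]
          exact hu0 m
      have hV0 : ∀ i, 0 ≤ V i := by
        intro i
        rcases eq_or_ne i k with rfl | hik
        · rw [hVk]
        · obtain ⟨m, rfl⟩ := Fin.exists_succAbove_eq hik
          rw [hVs]
          exact hv0 m
      have hWsum : ∑ i, W i = 1 := by
        rw [Fin.sum_univ_succAbove W j, hWj, zero_add]
        rw [Finset.sum_congr rfl fun i _ => hWs i]
        exact hu1
      have hVsum : ∑ i, V i = 1 := by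
        rw [Fin.sum_univ_succAbove V k, hVk, zero_add]
        rw [Finset.sum_congr rfl fun i _ => hVs i]
        exact hv1
      have hWx : ∑ i, W i • P i = x := by
        rw [Fin.sum_univ_succAbove (fun i => W i • P i) j, hWj, zero_smul, zero_add]
        rw [Finset.sum_congr rfl fun i _ => by rw [hWs i]]
        exact hux
      have hVx : ∑ i, V i • P i = x := by
        rw [Fin.sum_univ_succAbove (fun i => V i • P i) k, hVk, zero_smul, zero_add]
        rw [Finset.sum_congr rfl fun i _ => by rw [hVs i]]
        exact hvx
      set d : Fin (n+2) → ℝ := fun i => W i - V i with hd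
      have hd0 : ∑ i, d i = 0 := by
        rw [hd, Finset.sum_sub_distrib, hWsum, hVsum]
        ring
      have hdl : ∀ l, ∑ i, d i * P i l = 0 := by
        intro l
        have hx1 : (∑ i, W i • P i) l = (∑ i, V i • P i) l := by rw [hWx, hVx]
        rw [Finset.sum_apply, Finset.sum_apply] at hx1
        simp only [Pi.smul_apply, smul_eq_mul] at hx1
        rw [hd]
        simp only [sub_mul]
        rw [Finset.sum_sub_distrib, hx1]
        ring
      have hdc := hker1 d hd0 hdl j
      have hWk : W k = 0 := by
        have h1 : d k = (d j / c j) * c k := congrFun hdc k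
        have h2 : d j = -V j := by show W j - V j = -V j; rw [hWj]; ring
        have h3 : d k = W k := by show W k - V k = W k; rw [hVk]; ring
        have hpos : 0 < c k / c j := by
          have he : c k / c j = (c j * c k) / (c j ^ 2) := by
            rw [pow_two, mul_div_mul_left _ _ (hcne j)]
          rw [he]
          exact div_pos hsign (lt_of_le_of_ne (sq_nonneg (c j))
            (Ne.symm (pow_ne_zero 2 (hcne j))))
        have hVj : 0 ≤ V j := hV0 j
        have hle : W k ≤ 0 := by
          rw [← h3, h1, h2]
          calc -V j / c j * c k = -(V j * (c k / c j)) := by ring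
          _ ≤ 0 := neg_nonpos.2 (mul_nonneg hVj hpos.le)
        exact le_antisymm hle (hW0 k)
      -- x is a convex combination of points indexed by s
      have hkmem : k ∈ Finset.univ.erase j := Finset.mem_erase.2 ⟨hjk.symm, Finset.mem_univ k⟩
      have hsum1 : ∑ i ∈ s, W i = 1 := by
        have e1 : W j + ∑ i ∈ Finset.univ.erase j, W i = ∑ i, W i :=
          Finset.add_sum_erase _ W (Finset.mem_univ j)
        have e2 : W k + ∑ i ∈ s, W i = ∑ i ∈ Finset.univ.erase j, W i :=
          Finset.add_sum_erase _ W hkmem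
        rw [hWsum, hWj, zero_add] at e1
        rw [hWk, zero_add] at e2
        rw [e2, e1]
      have hsumx : ∑ i ∈ s, W i • P i = x := by
        have e1 : W j • P j + ∑ i ∈ Finset.univ.erase j, W i • P i = ∑ i, W i • P i :=
          Finset.add_sum_erase _ (fun i => W i • P i) (Finset.mem_univ j)
        have e2 : W k • P k + ∑ i ∈ s, W i • P i = ∑ i ∈ Finset.univ.erase j, W i • P i :=
          Finset.add_sum_erase _ (fun i => W i • P i) hkmem
        rw [hWx, hWj, zero_smul, zero_add] at e1
        rw [hWk, zero_smul, zero_add] at e2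
        rw [e2, e1]
      have hmem := Finset.centerMass_mem_convexHull (t := s) (w := W) (z := P)
        (fun i _ => hW0 i) (by rw [hsum1]; norm_num)
        (fun i hi => Set.mem_image_of_mem P (Finset.mem_coe.2 hi))
      rwa [Finset.centerMass_eq_of_sum_1 _ _ hsum1, hsumx] at hmem
    refine measure_mono_null hsubset (null_small P s ?_)
    rw [hsdef, Finset.card_erase_of_mem (Finset.mem_erase.2 ⟨hjk.symm, Finset.mem_univ k⟩),
      Finset.card_erase_of_mem (Finset.mem_univ j), Finset.card_univ, Fintype.card_fin]
    omega
  set Jp := Finset.univ.filter (fun j => 0 < c j) with hJp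
  set Jm := Finset.univ.filter (fun j => 0 < -c j) with hJm
  have hcover_p : convexHull ℝ (Set.range P) = ⋃ j ∈ Jp, S j := by
    rw [hJp, hS]
    exact hull_cover P c hsumc hcP hcne
  have hcover_m : convexHull ℝ (Set.range P) = ⋃ j ∈ Jm, S j := by
    rw [hJm, hS]
    exact hull_cover P (fun j => -c j)
      (by simp [hsumc])
      (by simp only [neg_smul]; simp [hcP])
      (fun j => neg_ne_zero.2 (hcne j))
  have hvolJp : volume (convexHull ℝ (Set.range P)) = ∑ j ∈ Jp, volume (S j) := by
    rw [hcover_p]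
    refine MeasureTheory.measure_biUnion_finset₀ ?_ (fun j _ => hSnm j)
    intro a ha b hb hab
    have hca : 0 < c a := (Finset.mem_filter.1 (Finset.mem_coe.1 ha)).2
    have hcb : 0 < c b := (Finset.mem_filter.1 (Finset.mem_coe.1 hb)).2
    exact hinter a b hab (mul_pos hca hcb)
  have hvolJm : volume (convexHull ℝ (Set.range P)) = ∑ j ∈ Jm, volume (S j) := by
    rw [hcover_m]
    refine MeasureTheory.measure_biUnion_finset₀ ?_ (fun j _ => hSnm j)
    intro a ha b hb hab
    have hca : 0 < -c a := (Finset.mem_filter.1 (Finset.mem_coe.1 ha)).2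
    have hcb : 0 < -c b := (Finset.mem_filter.1 (Finset.mem_coe.1 hb)).2
    exact hinter a b hab (by nlinarith)
  have hfin : ∀ j, volume (S j) ≠ ⊤ := fun j => (hScomp j).measure_lt_top.ne
  have hfactne : (n.factorial : ℝ) ≠ 0 := Nat.cast_ne_zero.2 n.factorial_ne_zero
  have hdet_eq : ∀ j, |(Ahat j).det| = n.factorial * (volume (S j)).toReal := by
    intro j
    rw [hvolS j, ENNReal.toReal_ofReal (by positivity), mul_comm,
      div_mul_cancel₀ _ hfactne]
  have hsum_part : ∑ j, |(Ahat j).det|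
      = ∑ j ∈ Jp, |(Ahat j).det| + ∑ j ∈ Jm, |(Ahat j).det| := by
    rw [← Finset.sum_filter_add_sum_filter_not Finset.univ (fun j => 0 < c j)
      (fun j => |(Ahat j).det|)]
    congr 1
    apply Finset.sum_congr ?_ (fun _ _ => rfl)
    ext j
    simp only [Finset.mem_filter, Finset.mem_univ, true_and, hJm, neg_pos]
    constructor
    · intro h
      exact lt_of_le_of_ne (not_lt.1 h) (hcne j)
    · intro h
      exact not_lt.2 h.le
  have key : ∀ (J : Finset (Fin (n+2))),
      volume (convexHull ℝ (Set.range P)) = ∑ j ∈ J, volume (S j) →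
      ∑ j ∈ J, |(Ahat j).det|
        = n.factorial * (volume (convexHull ℝ (Set.range P))).toReal := by
    intro J hJ
    calc ∑ j ∈ J, |(Ahat j).det| = ∑ j ∈ J, n.factorial * (volume (S j)).toReal :=
          Finset.sum_congr rfl fun j _ => hdet_eq j
      _ = n.factorial * ∑ j ∈ J, (volume (S j)).toReal := by rw [Finset.mul_sum]
      _ = n.factorial * (∑ j ∈ J, volume (S j)).toReal := by
          rw [ENNReal.toReal_sum fun j _ => hfin j]
      _ = _ := by rw [hJ]
  rw [hsum_part, key Jp hvolJp, key Jm hvolJm]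
  ring
end

section
/- Let f(z) = Σ_{α∈A} c_α z^α with Newton polytope Δ_f of full dimension n. Suppose z(j) ∈ (ℂ*)^n is a sequence of zeros of f with Arg(z(j)) → θ and z(j) converging in ℂ^n (or diverging) to a point outside (ℂ*)^n. If, after reordering A = {α_1, ..., α_N}, |z(j)^{α_1}| ≥ ... ≥ |z(j)^{α_N}| for all j and |z(j)^{α_k}|/|z(j)^{α_1}| → d_k ∈ [0,1], then d_N = 0, so that Γ = {α_k : d_k > 0} is a strict subset of A. -/
open Filter Topology

/-- Part 1 of Lemma 2.6: for a sequence of zeros `z(j)` of `f` in `(ℂ*)ⁿ` with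
`Arg z(j) → θ`, not converging to any point of `(ℂ*)ⁿ`, with the monomial moduli
ordered decreasingly and the ratios `|z(j)^{α_k}|/|z(j)^{α_1}| → d_k ∈ [0,1]`: if the
Newton polytope is full-dimensional, then `d_N = 0` (so `Γ = {α_k : d_k > 0}` is a
strict subface). -/
theorem stmt17 (n N : ℕ) (α : Fin (N + 1) → Fin n → ℤ) (c : Fin (N + 1) → ℂ)
    (hc : ∀ k, c k ≠ 0)
    (hfull : affineSpan ℝ (Set.range fun k => fun l => (α k l : ℝ)) = ⊤)
    (z : ℕ → Fin n → ℂ) (hz : ∀ j l, z j l ≠ 0)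
    (hzero : ∀ j, ∑ k, c k * ∏ l, z j l ^ α k l = 0)
    (θ : Fin n → ℝ)
    (harg : ∀ l, Tendsto (fun j => Complex.arg (z j l)) atTop (𝓝 (θ l)))
    (hnotconv : ¬ ∃ w : Fin n → ℂ, (∀ l, w l ≠ 0) ∧ Tendsto z atTop (𝓝 w))
    (hord : ∀ j, ∀ k k' : Fin (N + 1), k ≤ k' →
      ‖∏ l, z j l ^ α k' l‖ ≤ ‖∏ l, z j l ^ α k l‖)
    (d : Fin (N + 1) → ℝ) (hd : ∀ k, d k ∈ Set.Icc (0 : ℝ) 1)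
    (hratio : ∀ k, Tendsto
      (fun j => ‖∏ l, z j l ^ α k l‖ / ‖∏ l, z j l ^ α 0 l‖) atTop (𝓝 (d k))) :
    d (Fin.last N) = 0 := by
  by_contra hlast
  -- positivity of monomial norms
  have hprodpos : ∀ j k, (0:ℝ) < ‖∏ l, z j l ^ α k l‖ := by
    intro j k
    rw [norm_pos_iff]
    exact Finset.prod_ne_zero_iff.2 fun l _ => zpow_ne_zero _ (hz j l)
  -- all d k are positive
  have hdpos : ∀ k, 0 < d k := by
    intro k
    have h0 : 0 < d (Fin.last N) := lt_of_le_of_ne (hd _).1 (Ne.symm hlast)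
    refine lt_of_lt_of_le h0 ?_
    refine le_of_tendsto_of_tendsto (hratio (Fin.last N)) (hratio k) ?_
    filter_upwards with j
    gcongr
    exact hord j k (Fin.last N) (Fin.le_last k)
  set L : ℕ → Fin n → ℝ := fun j l => Real.log ‖z j l‖ with hLdef
  -- the log of each ratio converges
  have hlog : ∀ k, Tendsto
      (fun j => ∑ l, ((α k l : ℝ) - (α 0 l : ℝ)) * L j l) atTop (𝓝 (Real.log (d k))) := by
    intro k
    have hcont : Tendsto (fun j => Real.log
        (‖∏ l, z j l ^ α k l‖ / ‖∏ l, z j l ^ α 0 l‖)) atTop (𝓝 (Real.log (d k))) :=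
      ((Real.continuousAt_log (ne_of_gt (hdpos k))).tendsto).comp (hratio k)
    refine hcont.congr fun j => ?_
    have hne : ∀ k', ‖∏ l, z j l ^ α k' l‖ ≠ 0 := fun k' => ne_of_gt (hprodpos j k')
    have hexp : ∀ k', Real.log ‖∏ l, z j l ^ α k' l‖
        = ∑ l, (α k' l : ℝ) * L j l := by
      intro k'
      rw [norm_prod, Real.log_prod (fun l _ =>
        norm_ne_zero_iff.2 (zpow_ne_zero (α k' l) (hz j l)))]
      refine Finset.sum_congr rfl fun l _ => ?_
      rw [norm_zpow, Real.log_zpow]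
    rw [Real.log_div (hne k) (hne 0), hexp k, hexp 0, ← Finset.sum_sub_distrib]
    refine Finset.sum_congr rfl fun l _ => by ring
  -- the set of directions along which the log moduli converge is a submodule
  let S : Submodule ℝ (Fin n → ℝ) :=
    { carrier := {v | ∃ t, Tendsto (fun j => ∑ l, v l * L j l) atTop (𝓝 t)}
      zero_mem' := ⟨0, by simp⟩
      add_mem' := by
        rintro v w ⟨t, ht⟩ ⟨s, hs⟩
        exact ⟨t + s, by
          simpa [add_mul, Finset.sum_add_distrib] using ht.add hs⟩
      smul_mem' := by
        rintro a v ⟨t, ht⟩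
        exact ⟨a * t, by
          simpa [Finset.mul_sum, mul_assoc] using ht.const_mul a⟩ }
  have hStop : (⊤ : Submodule ℝ (Fin n → ℝ)) ≤ S := by
    have hvs := AffineSubspace.vectorSpan_eq_top_of_affineSpan_eq_top ℝ _ _ hfull
    rw [vectorSpan_range_eq_span_range_vsub_right ℝ _ (0 : Fin (N + 1))] at hvs
    rw [← hvs]
    refine Submodule.span_le.2 ?_
    rintro _ ⟨k, rfl⟩
    exact ⟨Real.log (d k), by
      refine (hlog k).congr fun j => Finset.sum_congr rfl fun l _ => ?_
      simp [vsub_eq_sub]⟩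
  -- hence each log‖z j l‖ converges
  have hcoord : ∀ l, ∃ t, Tendsto (fun j => L j l) atTop (𝓝 t) := by
    intro l
    obtain ⟨t, ht⟩ := hStop (Submodule.mem_top (x := Pi.single l (1:ℝ)))
    refine ⟨t, ht.congr fun j => ?_⟩
    rw [Finset.sum_eq_single l]
    · simp
    · intro b _ hb; simp [Pi.single_apply, hb]
    · simp
  choose t ht using hcoord
  -- so z converges to a point of (ℂ*)ⁿ
  refine hnotconv ⟨fun l => (Real.exp (t l) : ℂ) * Complex.exp (θ l * Complex.I), ?_, ?_⟩
  · intro l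
    exact mul_ne_zero (by exact_mod_cast (Real.exp_pos (t l)).ne') (Complex.exp_ne_zero _)
  · rw [tendsto_pi_nhds]
    intro l
    have hnorm : Tendsto (fun j => ‖z j l‖) atTop (𝓝 (Real.exp (t l))) := by
      have := (Real.continuous_exp.tendsto _).comp (ht l)
      refine this.congr fun j => ?_
      simp only [Function.comp, hLdef]
      exact Real.exp_log (norm_pos_iff.2 (hz j l))
    have h1 : Tendsto (fun j => (‖z j l‖ : ℂ)) atTop (𝓝 (Real.exp (t l) : ℂ)) :=
      (Complex.continuous_ofReal.tendsto _).comp hnorm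
    have h2 : Tendsto (fun j => Complex.exp ((Complex.arg (z j l) : ℂ) * Complex.I))
        atTop (𝓝 (Complex.exp ((θ l : ℂ) * Complex.I))) := by
      refine (Complex.continuous_exp.tendsto _).comp ?_
      exact (((Complex.continuous_ofReal.tendsto _).comp (harg l)).mul tendsto_const_nhds)
    refine (h1.mul h2).congr fun j => ?_
    exact Complex.norm_mul_exp_arg_mul_I (z j l)
end
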